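/- Concavity of the SEP-POMDP value function in the belief. The unique bounded fixed point v* of H is concave in the belief argument: for every s ∈ S, every b₁, b₂ ∈ B, and every t ∈ [0, 1], v*(s, t • b₁ + (1 − t) • b₂) ≥ t * v*(s, b₁) + (1 − t) * v*(s, b₂), where t • b₁ + (1 − t) • b₂ denotes the pointwise convex combination (which again lies in B). -/

import Mathlib

open Finset

/-- The belief simplex over the modulation space `M`. -/
abbrev Belief (M : Type) [Fintype M] : Type :=
  {b : M → ℝ // (∀ μ, 0 ≤ b μ) ∧ ∑ μ, b μ = 1}

/-- A finite SEP-POMDP: feasible action sets, cost function, state transition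
probabilities, modulation/observation probabilities, and a discount factor. -/
structure SEP (S Y M A : Type) [Fintype S] [Fintype Y] [Fintype M] [Fintype A] where
  act : S → Finset A
  act_ne : ∀ s, (act s).Nonempty
  c : S → Y → A → ℝ
  p : Y → S → A → S → ℝ
  p_nonneg : ∀ y' s a s', 0 ≤ p y' s a s'
  p_sum : ∀ y' s a, ∑ s', p y' s a s' = 1
  Q : M → Y → M → ℝ
  Q_nonneg : ∀ μ y' μ', 0 ≤ Q μ y' μ'
  Q_sum : ∀ μ, ∑ y', ∑ μ', Q μ y' μ' = 1
  β : ℝ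
  β_nonneg : 0 ≤ β
  β_lt_one : β < 1

namespace SEP

variable {S Y M A : Type} [Fintype S] [Fintype Y] [Fintype M] [Fintype A]

/-- `σ(y' | b) = ∑ μ, ∑ μ', b μ * Q μ y' μ'`. -/
def sig (P : SEP S Y M A) (b : Belief M) (y' : Y) : ℝ :=
  ∑ μ, ∑ μ', b.1 μ * P.Q μ y' μ'

/-- The Bayesian belief update `λ(y', b)`. -/
noncomputable def lam (P : SEP S Y M A) (y' : Y) (b : Belief M) : Belief M :=
  if h : 0 < P.sig b y' then
    ⟨fun μ' => (∑ μ, b.1 μ * P.Q μ y' μ') / P.sig b y',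
      fun μ' => div_nonneg (Finset.sum_nonneg fun μ _ =>
        mul_nonneg (b.2.1 μ) (P.Q_nonneg μ y' μ')) h.le,
      by
        rw [← Finset.sum_div, Finset.sum_comm]
        exact div_self (ne_of_gt h)⟩
  else b

/-- `h_{y'}(s, a, v̄) = c s y' a + β * ∑ s', p y' s a s' * v̄ s'`. -/
def hy (P : SEP S Y M A) (y' : Y) (s : S) (a : A) (vb : S → ℝ) : ℝ :=
  P.c s y' a + P.β * ∑ s', P.p y' s a s' * vb s'

/-- The Bellman operator `H` of the SEP-POMDP. -/
noncomputable def H (P : SEP S Y M A) (v : S → Belief M → ℝ) (s : S) (b : Belief M) : ℝ :=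
  (P.act s).inf' (P.act_ne s) fun a =>
    ∑ y', P.sig b y' * P.hy y' s a fun s' => v s' (P.lam y' b)

/-- Boundedness of a function `v : S × B → ℝ`. -/
def Bdd (v : S → Belief M → ℝ) : Prop :=
  ∃ C, ∀ s b, |v s b| ≤ C

end SEP


/-- Pointwise convex combination `t • b₁ + (1 - t) • b₂` of two beliefs. -/
def Belief.conv {M : Type} [Fintype M] (t : ℝ) (ht0 : 0 ≤ t) (ht1 : t ≤ 1)
    (b₁ b₂ : Belief M) : Belief M :=
  ⟨fun μ => t * b₁.1 μ + (1 - t) * b₂.1 μ,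
    fun μ => add_nonneg (mul_nonneg ht0 (b₁.2.1 μ))
      (mul_nonneg (by linarith) (b₂.2.1 μ)),
    by
      rw [Finset.sum_add_distrib, ← Finset.mul_sum, ← Finset.mul_sum, b₁.2.2, b₂.2.2]
      ring⟩


/-!
Call `F : Belief M → ℝ` concave up to `D` if `t F b₁ + (1 - t) F b₂ ≤ F (t b₁ + (1 - t) b₂) + D`.
If every `v s'` is concave up to `D`, then every `H v s` is concave up to `β D`. The reason is
that the joint probability `σ(y' | b) λ(y', b)` is linear in `b`: the posterior of a mixture is
the mixture of the posteriors with weights `t σ(y' | b₁) / σ(y' | b)`, so each summand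
`σ(y' | b) h_{y'}(s, a, v(·, λ(y', b)))` inherits the defect scaled by `σ(y' | b) β`, and taking
the minimum over actions keeps it. A bounded fixed point is concave up to `2C`, hence up to
`βⁿ 2C` for every `n`, hence concave.
-/

open Filter Topology

namespace Belief

variable {M : Type} [Fintype M]

def ConcaveUpTo (D : ℝ) (F : Belief M → ℝ) : Prop :=
  ∀ (b₁ b₂ : Belief M) (t : ℝ) (ht0 : 0 ≤ t) (ht1 : t ≤ 1),
    t * F b₁ + (1 - t) * F b₂ ≤ F (Belief.conv t ht0 ht1 b₁ b₂) + D

lemma concaveUpTo_of_abs_le {F : Belief M → ℝ} {C : ℝ} (hC : ∀ b, |F b| ≤ C) :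
    ConcaveUpTo (2 * C) F := by
  intro b₁ b₂ t ht0 ht1
  have h₁ := (abs_le.mp (hC b₁)).2
  have h₂ := (abs_le.mp (hC b₂)).2
  have h₃ := (abs_le.mp (hC (Belief.conv t ht0 ht1 b₁ b₂))).1
  nlinarith

lemma concaveUpTo_inf' {ι : Type*} {s : Finset ι} (hs : s.Nonempty) {f : ι → Belief M → ℝ}
    {D : ℝ} (hf : ∀ i ∈ s, ConcaveUpTo D (f i)) :
    ConcaveUpTo D fun b => s.inf' hs fun i => f i b := by
  intro b₁ b₂ t ht0 ht1
  obtain ⟨i, hi, hmin⟩ := s.exists_mem_eq_inf' hs fun i => f i (Belief.conv t ht0 ht1 b₁ b₂)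
  calc t * s.inf' hs (fun i => f i b₁) + (1 - t) * s.inf' hs (fun i => f i b₂)
      ≤ t * f i b₁ + (1 - t) * f i b₂ := by
        have ht1' : 0 ≤ 1 - t := sub_nonneg.2 ht1
        gcongr <;> exact s.inf'_le _ hi
    _ ≤ f i (Belief.conv t ht0 ht1 b₁ b₂) + D := hf i hi b₁ b₂ t ht0 ht1
    _ = _ := by rw [← hmin]

end Belief

namespace SEP

variable {S Y M A : Type} [Fintype S] [Fintype Y] [Fintype M] [Fintype A] (P : SEP S Y M A)

def jointProb (b : Belief M) (y' : Y) (μ' : M) : ℝ :=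
  ∑ μ, b.1 μ * P.Q μ y' μ'

lemma jointProb_nonneg (b : Belief M) (y' : Y) (μ' : M) : 0 ≤ P.jointProb b y' μ' :=
  Finset.sum_nonneg fun μ _ => mul_nonneg (b.2.1 μ) (P.Q_nonneg μ y' μ')

lemma sig_eq_sum_jointProb (b : Belief M) (y' : Y) : P.sig b y' = ∑ μ', P.jointProb b y' μ' :=
  Finset.sum_comm

lemma sig_nonneg (b : Belief M) (y' : Y) : 0 ≤ P.sig b y' := by
  rw [sig_eq_sum_jointProb]
  exact Finset.sum_nonneg fun μ' _ => P.jointProb_nonneg b y' μ'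

lemma sum_sig (b : Belief M) : ∑ y', P.sig b y' = 1 := by
  simp only [sig, ← Finset.mul_sum]
  rw [Finset.sum_comm]
  simp only [← Finset.mul_sum, P.Q_sum, mul_one, b.2.2]

lemma jointProb_conv (b₁ b₂ : Belief M) (t : ℝ) (ht0 : 0 ≤ t) (ht1 : t ≤ 1) (y' : Y)
    (μ' : M) :
    P.jointProb (Belief.conv t ht0 ht1 b₁ b₂) y' μ'
      = t * P.jointProb b₁ y' μ' + (1 - t) * P.jointProb b₂ y' μ' := by
  simp only [jointProb, Belief.conv, Finset.mul_sum, ← Finset.sum_add_distrib]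
  exact Finset.sum_congr rfl fun μ _ => by ring

lemma sig_conv (b₁ b₂ : Belief M) (t : ℝ) (ht0 : 0 ≤ t) (ht1 : t ≤ 1) (y' : Y) :
    P.sig (Belief.conv t ht0 ht1 b₁ b₂) y' = t * P.sig b₁ y' + (1 - t) * P.sig b₂ y' := by
  simp only [sig_eq_sum_jointProb, jointProb_conv, Finset.sum_add_distrib, Finset.mul_sum]

-- When `σ(y' | b) = 0` both sides vanish, whatever the junk value of `λ(y', b)`.
lemma sig_mul_lam (b : Belief M) (y' : Y) (μ' : M) :
    P.sig b y' * (P.lam y' b).1 μ' = P.jointProb b y' μ' := by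
  rcases (P.sig_nonneg b y').eq_or_lt with h | h
  · have hsum : ∑ μ', P.jointProb b y' μ' = 0 := by rw [← sig_eq_sum_jointProb, h]
    rw [← h, zero_mul, eq_comm]
    exact (Finset.sum_eq_zero_iff_of_nonneg fun μ' _ => P.jointProb_nonneg b y' μ').mp hsum μ'
      (Finset.mem_univ μ')
  · rw [lam, dif_pos h]
    exact mul_div_cancel₀ _ h.ne'

lemma lam_conv (b₁ b₂ : Belief M) (t : ℝ) (ht0 : 0 ≤ t) (ht1 : t ≤ 1) (y' : Y)
    (hσ : 0 < P.sig (Belief.conv t ht0 ht1 b₁ b₂) y') {w : ℝ}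
    (hw : P.sig (Belief.conv t ht0 ht1 b₁ b₂) y' * w = t * P.sig b₁ y') (hw0 : 0 ≤ w)
    (hw1 : w ≤ 1) :
    P.lam y' (Belief.conv t ht0 ht1 b₁ b₂)
      = Belief.conv w hw0 hw1 (P.lam y' b₁) (P.lam y' b₂) := by
  set σ := P.sig (Belief.conv t ht0 ht1 b₁ b₂) y'
  have hw' : σ * (1 - w) = (1 - t) * P.sig b₂ y' := by
    linear_combination P.sig_conv b₁ b₂ t ht0 ht1 y' - hw
  refine Subtype.ext (funext fun μ' => mul_left_cancel₀ hσ.ne' ?_)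
  change σ * (P.lam y' _).1 μ' = σ * (w * (P.lam y' b₁).1 μ' + (1 - w) * (P.lam y' b₂).1 μ')
  calc σ * (P.lam y' _).1 μ'
      = t * (P.sig b₁ y' * (P.lam y' b₁).1 μ')
          + (1 - t) * (P.sig b₂ y' * (P.lam y' b₂).1 μ') := by
        rw [sig_mul_lam, sig_mul_lam, sig_mul_lam, jointProb_conv]
    _ = σ * (w * (P.lam y' b₁).1 μ' + (1 - w) * (P.lam y' b₂).1 μ') := by
        linear_combination (-(P.lam y' b₁).1 μ') * hw - (P.lam y' b₂).1 μ' * hw'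

-- Concavity of the perspective `b ↦ σ(y' | b) F(λ(y', b))`, up to the scaled defect.
lemma sig_mul_comp_lam_conv_le {F : Belief M → ℝ} {E : ℝ} (hF : Belief.ConcaveUpTo E F)
    (b₁ b₂ : Belief M) (t : ℝ) (ht0 : 0 ≤ t) (ht1 : t ≤ 1) (y' : Y) :
    t * (P.sig b₁ y' * F (P.lam y' b₁)) + (1 - t) * (P.sig b₂ y' * F (P.lam y' b₂))
      ≤ P.sig (Belief.conv t ht0 ht1 b₁ b₂) y'
          * (F (P.lam y' (Belief.conv t ht0 ht1 b₁ b₂)) + E) := by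
  set σ := P.sig (Belief.conv t ht0 ht1 b₁ b₂) y'
  have hσ : σ = t * P.sig b₁ y' + (1 - t) * P.sig b₂ y' := P.sig_conv b₁ b₂ t ht0 ht1 y'
  have h₁ : 0 ≤ t * P.sig b₁ y' := mul_nonneg ht0 (P.sig_nonneg b₁ y')
  have h₂ : 0 ≤ (1 - t) * P.sig b₂ y' := mul_nonneg (sub_nonneg.2 ht1) (P.sig_nonneg b₂ y')
  rcases (P.sig_nonneg (Belief.conv t ht0 ht1 b₁ b₂) y').eq_or_lt with hσ0 | hσpos
  · have h₁0 : t * P.sig b₁ y' = 0 := by linarith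
    have h₂0 : (1 - t) * P.sig b₂ y' = 0 := by linarith
    linear_combination F (P.lam y' b₁) * h₁0 + F (P.lam y' b₂) * h₂0
      + (F (P.lam y' (Belief.conv t ht0 ht1 b₁ b₂)) + E) * hσ0
  · set w := t * P.sig b₁ y' / σ
    have hw : σ * w = t * P.sig b₁ y' := mul_div_cancel₀ _ hσpos.ne'
    have hw0 : 0 ≤ w := div_nonneg h₁ hσpos.le
    have hw1 : w ≤ 1 := (div_le_one hσpos).2 (by linarith)
    have hconc := hF (P.lam y' b₁) (P.lam y' b₂) w hw0 hw1
    rw [← P.lam_conv b₁ b₂ t ht0 ht1 y' hσpos hw hw0 hw1] at hconc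
    calc t * (P.sig b₁ y' * F (P.lam y' b₁)) + (1 - t) * (P.sig b₂ y' * F (P.lam y' b₂))
        = σ * (w * F (P.lam y' b₁) + (1 - w) * F (P.lam y' b₂)) := by
          linear_combination (-F (P.lam y' b₁) + F (P.lam y' b₂)) * hw
            - F (P.lam y' b₂) * hσ
      _ ≤ σ * (F (P.lam y' (Belief.conv t ht0 ht1 b₁ b₂)) + E) := by gcongr

lemma hy_concaveUpTo {v : S → Belief M → ℝ} {D : ℝ} (hv : ∀ s', Belief.ConcaveUpTo D (v s'))
    (y' : Y) (s : S) (a : A) :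
    Belief.ConcaveUpTo (P.β * D) fun b => P.hy y' s a fun s' => v s' b := by
  intro b₁ b₂ t ht0 ht1
  have hexp : ∑ s', P.p y' s a s' * (t * v s' b₁ + (1 - t) * v s' b₂)
      ≤ ∑ s', P.p y' s a s' * v s' (Belief.conv t ht0 ht1 b₁ b₂) + D :=
    calc ∑ s', P.p y' s a s' * (t * v s' b₁ + (1 - t) * v s' b₂)
        ≤ ∑ s', P.p y' s a s' * (v s' (Belief.conv t ht0 ht1 b₁ b₂) + D) :=
          Finset.sum_le_sum fun s' _ =>
            mul_le_mul_of_nonneg_left (hv s' b₁ b₂ t ht0 ht1) (P.p_nonneg y' s a s')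
      _ = _ := by simp only [mul_add, Finset.sum_add_distrib, ← Finset.sum_mul, P.p_sum, one_mul]
  have hlin : ∑ s', P.p y' s a s' * (t * v s' b₁ + (1 - t) * v s' b₂)
      = t * ∑ s', P.p y' s a s' * v s' b₁ + (1 - t) * ∑ s', P.p y' s a s' * v s' b₂ := by
    simp only [Finset.mul_sum, ← Finset.sum_add_distrib]
    exact Finset.sum_congr rfl fun s' _ => by ring
  rw [hlin] at hexp
  simp only [hy]
  linear_combination mul_le_mul_of_nonneg_left hexp P.β_nonneg

lemma H_concaveUpTo {v : S → Belief M → ℝ} {D : ℝ} (hv : ∀ s', Belief.ConcaveUpTo D (v s'))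
    (s : S) : Belief.ConcaveUpTo (P.β * D) (P.H v s) := by
  refine Belief.concaveUpTo_inf' (P.act_ne s) fun a _ b₁ b₂ t ht0 ht1 => ?_
  set bc := Belief.conv t ht0 ht1 b₁ b₂
  have hF := P.hy_concaveUpTo hv
  calc t * ∑ y', P.sig b₁ y' * P.hy y' s a (fun s' => v s' (P.lam y' b₁))
        + (1 - t) * ∑ y', P.sig b₂ y' * P.hy y' s a (fun s' => v s' (P.lam y' b₂))
      = ∑ y', (t * (P.sig b₁ y' * P.hy y' s a (fun s' => v s' (P.lam y' b₁)))
          + (1 - t) * (P.sig b₂ y' * P.hy y' s a (fun s' => v s' (P.lam y' b₂)))) := by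
        rw [Finset.mul_sum, Finset.mul_sum, ← Finset.sum_add_distrib]
    _ ≤ ∑ y', P.sig bc y' * (P.hy y' s a (fun s' => v s' (P.lam y' bc)) + P.β * D) :=
        Finset.sum_le_sum fun y' _ => P.sig_mul_comp_lam_conv_le (hF y' s a) b₁ b₂ t ht0 ht1 y'
    _ = ∑ y', P.sig bc y' * P.hy y' s a (fun s' => v s' (P.lam y' bc)) + P.β * D := by
        simp only [mul_add, Finset.sum_add_distrib, ← Finset.sum_mul, P.sum_sig, one_mul]

end SEP

theorem value_concave_in_belief_general {S Y M A : Type} [Fintype S] [Fintype Y] [Fintype M] [Fintype A]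
    (P : SEP S Y M A)
    (vstar : S → Belief M → ℝ) (hbdd : SEP.Bdd vstar)
    (hfix : ∀ s b, vstar s b = P.H vstar s b) :
    ∀ (s : S) (b₁ b₂ : Belief M) (t : ℝ) (ht0 : 0 ≤ t) (ht1 : t ≤ 1),
      t * vstar s b₁ + (1 - t) * vstar s b₂ ≤ vstar s (Belief.conv t ht0 ht1 b₁ b₂) := by
  intro s b₁ b₂ t ht0 ht1
  obtain ⟨C, hC⟩ := hbdd
  have hH : P.H vstar = vstar := funext₂ fun s b => (hfix s b).symm
  have hdefect : ∀ n : ℕ, ∀ s, Belief.ConcaveUpTo (P.β ^ n * (2 * C)) (vstar s) := by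
    intro n
    induction n with
    | zero => simpa using fun s => Belief.concaveUpTo_of_abs_le (hC s)
    | succ n ih => simpa only [hH, pow_succ', mul_assoc] using P.H_concaveUpTo ih
  have hlim : Tendsto (fun n : ℕ => vstar s (Belief.conv t ht0 ht1 b₁ b₂) + P.β ^ n * (2 * C))
      atTop (𝓝 (vstar s (Belief.conv t ht0 ht1 b₁ b₂))) := by
    simpa using tendsto_const_nhds.add
      ((tendsto_pow_atTop_nhds_zero_of_lt_one P.β_nonneg P.β_lt_one).mul_const (2 * C))
  exact ge_of_tendsto' hlim fun n => hdefect n s b₁ b₂ t ht0 ht1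

/-- **Concavity of the SEP-POMDP value function in the belief.** The unique
bounded fixed point `vstar` of `H` is concave in the belief argument. -/
theorem value_concave_in_belief {S Y M A : Type} [Fintype S] [Fintype Y] [Fintype M] [Fintype A]
    [Nonempty S] [Nonempty Y] [Nonempty M] [Nonempty A]
    (P : SEP S Y M A)
    (vstar : S → Belief M → ℝ) (hbdd : SEP.Bdd vstar)
    (hfix : ∀ s b, vstar s b = P.H vstar s b) :
    ∀ (s : S) (b₁ b₂ : Belief M) (t : ℝ) (ht0 : 0 ≤ t) (ht1 : t ≤ 1),
      t * vstar s b₁ + (1 - t) * vstar s b₂ ≤ vstar s (Belief.conv t ht0 ht1 b₁ b₂) :=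
  value_concave_in_belief_general P vstar hbdd hfix
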